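/- Let G be a topological group, f: G → ℝ continuous, and K ⊆ G a compact neighbourhood of the identity. Suppose f attains its maximum value M over K only at points in the interior of K. Then there exists an open neighbourhood V of the identity such that for all v ∈ V, max_{u∈K} f(v⁻¹u) = max_{u∈K} f(u). -/

import Mathlib

/-!
The set `W = interior K ∪ {f < M}` is open, contains `K` (maximisers lie in the interior) and
`f ≤ M` on it. By compactness of `K`, a whole neighbourhood `V` of `1` satisfies `V * K ⊆ W`, so
translates of `K` by `V` see no value above `M`. Conversely, a maximiser `x₀ ∈ interior K` stays
reachable: `v * x₀ ∈ K` for `v` near `1`, and `f (v⁻¹ * (v * x₀)) = M`.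
-/

open Filter Topology

section

variable {G α : Type*} [Group G] [TopologicalSpace G] [IsTopologicalGroup G]
  [LinearOrder α] [TopologicalSpace α] [OrderClosedTopology α]

theorem eventually_forall_mul_le_of_maximizers_mem_interior {f : G → α} (hf : Continuous f)
    {K : Set G} (hK : IsCompact K) {M : α} (hle : ∀ u ∈ K, f u ≤ M)
    (hint : ∀ u ∈ K, f u = M → u ∈ interior K) :
    ∀ᶠ v in 𝓝 (1 : G), ∀ u ∈ K, f (v * u) ≤ M := by
  set W := interior K ∪ {x | f x < M}
  have hW_open : IsOpen W := isOpen_interior.union (isOpen_lt hf continuous_const)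
  have hKW : K ⊆ W := fun u hu ↦
    (hle u hu).lt_or_eq.elim Or.inr fun h ↦ Or.inl (hint u hu h)
  have hfW : ∀ x ∈ W, f x ≤ M := by
    rintro x (hx | hx)
    exacts [hle x (interior_subset hx), hx.le]
  obtain ⟨V, hV, hVK⟩ := compact_open_separated_mul_left hK hW_open hKW
  filter_upwards [hV] with v hv u hu
  exact hfW _ (hVK (Set.mul_mem_mul hv hu))

theorem eventually_isGreatest_image_inv_mul {f : G → α} (hf : Continuous f)
    {K : Set G} (hK : IsCompact K) {M : α} (hle : ∀ u ∈ K, f u ≤ M)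
    (hint : ∀ u ∈ K, f u = M → u ∈ interior K) {x₀ : G} (hx₀ : x₀ ∈ K) (hfx₀ : f x₀ = M) :
    ∀ᶠ v in 𝓝 (1 : G), IsGreatest ((fun u ↦ f (v⁻¹ * u)) '' K) M := by
  have hupper : ∀ᶠ v in 𝓝 (1 : G), ∀ u ∈ K, f (v⁻¹ * u) ≤ M :=
    (continuous_inv.tendsto' 1 1 inv_one).eventually
      (eventually_forall_mul_le_of_maximizers_mem_interior hf hK hle hint)
  have hreach : ∀ᶠ v in 𝓝 (1 : G), v * x₀ ∈ K :=
    (continuous_mul_const x₀).tendsto' 1 x₀ (one_mul x₀)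
      (mem_interior_iff_mem_nhds.mp (hint x₀ hx₀ hfx₀))
  filter_upwards [hupper, hreach] with v hv hvx₀
  refine ⟨⟨v * x₀, hvx₀, by simp [hfx₀]⟩, ?_⟩
  rintro _ ⟨u, hu, rfl⟩
  exact hv u hu

end

theorem stmt_11_general {G : Type*} [Group G] [TopologicalSpace G] [IsTopologicalGroup G]
    (f : G → ℝ) (hf : Continuous f)
    (K : Set G) (hK : IsCompact K)
    (M : ℝ) (hM : M = sSup (f '' K))
    (hattain : ∃ u ∈ K, f u = M)
    (hint : ∀ u ∈ K, f u = M → u ∈ interior K) :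
    ∃ V : Set G, IsOpen V ∧ (1 : G) ∈ V ∧
      ∀ v ∈ V, sSup ((fun u => f (v⁻¹ * u)) '' K) = M := by
  obtain ⟨x₀, hx₀, hfx₀⟩ := hattain
  have hle : ∀ u ∈ K, f u ≤ M := fun u hu ↦
    hM ▸ le_csSup (hK.bddAbove_image hf.continuousOn) ⟨u, hu, rfl⟩
  obtain ⟨V, hV, hV_open, h1V⟩ := eventually_nhds_iff.mp
    (eventually_isGreatest_image_inv_mul hf hK hle hint hx₀ hfx₀)
  exact ⟨V, hV_open, h1V, fun v hv ↦ (hV v hv).csSup_eq⟩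

/-- Local invariance of compact max-pooling: if `K` is a compact neighbourhood of the
identity and the continuous function `f` attains its maximum `M` over `K` only at interior
points of `K`, then there is an open neighbourhood `V` of the identity such that
`max_{u ∈ K} f(v⁻¹u) = max_{u ∈ K} f(u)` for all `v ∈ V`. -/
theorem stmt_11 {G : Type*} [Group G] [TopologicalSpace G] [IsTopologicalGroup G]
    (f : G → ℝ) (hf : Continuous f)
    (K : Set G) (hK : IsCompact K) (hKnbhd : K ∈ nhds (1 : G))
    (M : ℝ) (hM : M = sSup (f '' K))
    (hattain : ∃ u ∈ K, f u = M)
    (hint : ∀ u ∈ K, f u = M → u ∈ interior K) :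
    ∃ V : Set G, IsOpen V ∧ (1 : G) ∈ V ∧
      ∀ v ∈ V, sSup ((fun u => f (v⁻¹ * u)) '' K) = M :=
  stmt_11_general f hf K hK M hM hattain hint
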